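/- Fix an odd integer β ≥ 3, integers D ≥ 1 and K ≥ 1, and a real v_max > 0, and let Δ = 2·v_max/(β^D − 1). If V_1, …, V_K are independent real random variables, each uniformly distributed on the interval [−v_max − Δ/2, v_max + Δ/2], then the mean squared averaged quantization error satisfies E[((1/K)·Σ_{k=1}^{K} (q(V_k) − V_k))²] = v_max²/(3·K·(β^D − 1)²). -/

import Mathlib

/-- Clamping of `v` to the interval `[-vmax, vmax]`. -/
noncomputable def clampR (vmax v : ℝ) : ℝ := max (-vmax) (min v vmax)

/-- The quantization index `n(v) = ⌊(ξ/v_max)·v' + ξ + 1/2⌋` where `ξ = (β^D − 1)/2` and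
`v'` is the clamped value of `v`. -/
noncomputable def qidx (β D : ℕ) (vmax v : ℝ) : ℤ :=
  ⌊(((β : ℝ) ^ D - 1) / 2 / vmax) * clampR vmax v + ((β : ℝ) ^ D - 1) / 2 + 1 / 2⌋

/-- The `i`th base-`β` digit `b_i(v) ∈ {0,…,β−1}` of the quantization index `n(v)`. -/
noncomputable def bdigit (β D : ℕ) (vmax v : ℝ) (i : ℕ) : ℕ :=
  (qidx β D vmax v).toNat / β ^ i % β

/-- The `i`th balanced numeral `x_i(v) = b_i(v) − (β−1)/2`. -/
noncomputable def numeral (β D : ℕ) (vmax v : ℝ) (i : ℕ) : ℤ :=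
  (bdigit β D vmax v i : ℤ) - ((β : ℤ) - 1) / 2

/-- The quantizer (decoder composed with encoder)
`q(v) = (v_max/ξ)·Σ_{i=0}^{D−1} x_i(v)·β^i` where `ξ = (β^D − 1)/2`. -/
noncomputable def quant (β D : ℕ) (vmax v : ℝ) : ℝ :=
  vmax / (((β : ℝ) ^ D - 1) / 2) *
    ∑ i ∈ Finset.range D, (numeral β D vmax v i : ℝ) * (β : ℝ) ^ i

/-!
Up to clamping, the quantizer is rounding to the grid `-v_max + Δ ℤ`: the balanced digits
`x_i = b_i - (β - 1)/2` encode `n(v) - ξ`, so `q(v) = Δ·n(v) - v_max`. On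
`[-v_max - Δ/2, v_max + Δ/2)` clamping does not change `n(v) = ⌊(v + v_max)/Δ + 1/2⌋`, hence
`q(v) - v = Δ·(1/2 - fract((v + v_max)/Δ + 1/2))` is a sawtooth of period `Δ`. The interval has
length `β^D·Δ`, a whole number of periods, so for uniform `V` the error is uniform on
`[-Δ/2, Δ/2]`: it has mean `0` and second moment `Δ²/12`. The errors of independent samples are
independent and centred, so the second moment of their average is `Δ²/(12K)`.
-/

open MeasureTheory ProbabilityTheory Set Finset

lemma abs_half_sub_fract_le (t : ℝ) : |1 / 2 - Int.fract t| ≤ 1 / 2 := by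
  rw [abs_le]
  constructor <;> linarith [Int.fract_nonneg t, Int.fract_lt_one t]

lemma intervalIntegrable_pow_half_sub_fract (p : ℕ) (a b : ℝ) :
    IntervalIntegrable (fun t : ℝ => (1 / 2 - Int.fract t) ^ p) volume a b := by
  refine (intervalIntegrable_iff.2 <| Measure.integrableOn_of_bounded (M := 1)
    measure_Ioc_lt_top.ne ?_ (ae_of_all _ fun t => ?_))
  · exact ((measurable_const.sub measurable_fract).pow_const p).aestronglyMeasurable
  · rw [norm_pow, Real.norm_eq_abs]
    exact pow_le_one₀ (abs_nonneg _) ((abs_half_sub_fract_le t).trans (by norm_num))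

lemma integral_pow_half_sub_fract (p N : ℕ) :
    ∫ t in (0 : ℝ)..N, (1 / 2 - Int.fract t) ^ p
      = N * ∫ t in (0 : ℝ)..1, (1 / 2 - t) ^ p := by
  have hper : Function.Periodic (fun t : ℝ => (1 / 2 - Int.fract t) ^ p) 1 := fun t => by
    simp only [Int.fract_add_one]
  have hunit : ∫ t in (0 : ℝ)..1, (1 / 2 - Int.fract t) ^ p
      = ∫ t in (0 : ℝ)..1, (1 / 2 - t) ^ p := by
    refine intervalIntegral.integral_congr_ae ?_
    filter_upwards [Measure.ae_ne volume 1] with t ht hmem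
    rw [uIoc_of_le zero_le_one] at hmem
    rw [Int.fract_eq_self.2 ⟨hmem.1.le, hmem.2.lt_of_ne ht⟩]
  have := hper.intervalIntegral_add_zsmul_eq N 0 (intervalIntegrable_pow_half_sub_fract p)
  simp only [zero_add, zsmul_eq_mul, mul_one, Int.cast_natCast] at this
  rw [this, hunit]

lemma integral_cond_Icc {a b : ℝ} (hab : a ≤ b) (g : ℝ → ℝ) :
    ∫ x, g x ∂volume[|Icc a b] = (b - a)⁻¹ * ∫ x in a..b, g x := by
  rw [ProbabilityTheory.cond, integral_smul_measure, Real.volume_Icc,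
    intervalIntegral.integral_of_le hab, integral_Icc_eq_integral_Ioc, ENNReal.toReal_inv,
    ENNReal.toReal_ofReal (sub_nonneg.2 hab), smul_eq_mul]

lemma integral_cond_Icc_mul_half_sub_fract_pow {a Δ : ℝ} (hΔ : 0 < Δ) {N : ℕ} (hN : 0 < N)
    (p : ℕ) :
    ∫ v, (Δ * (1 / 2 - Int.fract ((v - a) / Δ))) ^ p ∂volume[|Icc a (a + N * Δ)]
      = Δ ^ p * ∫ t in (0 : ℝ)..1, (1 / 2 - t) ^ p := by
  have hN' : (0 : ℝ) < N := Nat.cast_pos.2 hN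
  simp only [mul_pow]
  rw [integral_cond_Icc (by nlinarith), intervalIntegral.integral_const_mul,
    intervalIntegral.integral_comp_sub_right (fun u => (1 / 2 - Int.fract (u / Δ)) ^ p),
    intervalIntegral.integral_comp_div (fun t => (1 / 2 - Int.fract t) ^ p) hΔ.ne',
    sub_self, zero_div, add_sub_cancel_left, mul_div_cancel_right₀ _ hΔ.ne',
    integral_pow_half_sub_fract, smul_eq_mul]
  field_simp

lemma integral_half_sub_pow (p : ℕ) :
    ∫ t in (0 : ℝ)..1, (1 / 2 - t) ^ p
      = ((1 / 2) ^ (p + 1) - (-1 / 2) ^ (p + 1)) / (p + 1) := by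
  rw [intervalIntegral.integral_comp_sub_left (· ^ p), integral_pow]
  norm_num

lemma Nat.sum_range_div_pow_mod_mul_pow {β : ℕ} :
    ∀ {D n : ℕ}, n < β ^ D → ∑ i ∈ range D, n / β ^ i % β * β ^ i = n := by
  intro D
  induction D with
  | zero => simp
  | succ D ih =>
    intro n hn
    have hdiv : n / β < β ^ D := Nat.div_lt_of_lt_mul (by rwa [← pow_succ'])
    calc ∑ i ∈ range (D + 1), n / β ^ i % β * β ^ i
        = (∑ i ∈ range D, n / β / β ^ i % β * β ^ i) * β + n % β := by
          rw [sum_range_succ', sum_mul]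
          simp [pow_succ', Nat.div_div_eq_div_mul, mul_assoc, mul_comm β]
      _ = n := by rw [ih hdiv, mul_comm, Nat.div_add_mod]

lemma two_mul_sum_balanced_digits {β D n : ℕ} (hodd : Odd β) (hn : n < β ^ D) :
    2 * ∑ i ∈ range D, (((n / β ^ i % β : ℕ) : ℤ) - ((β : ℤ) - 1) / 2) * (β : ℤ) ^ i
      = 2 * n - ((β : ℤ) ^ D - 1) := by
  have hdigits : ∑ i ∈ range D, ((n / β ^ i % β : ℕ) : ℤ) * (β : ℤ) ^ i = n := by
    exact_mod_cast Nat.sum_range_div_pow_mod_mul_pow hn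
  have hhalf : 2 * (((β : ℤ) - 1) / 2) = (β : ℤ) - 1 := by
    obtain ⟨k, rfl⟩ := hodd
    push_cast
    omega
  rw [← geom_sum_mul, sum_congr rfl fun i _ => sub_mul _ _ _, sum_sub_distrib, hdigits,
    ← mul_sum, mul_sub, ← mul_assoc, hhalf]
  ring

noncomputable def quantStep (β D : ℕ) (vmax : ℝ) : ℝ := 2 * vmax / ((β : ℝ) ^ D - 1)

section Quantizer

variable {β D : ℕ} {vmax : ℝ}

lemma cast_pow_sub_one_pos (hN : 1 < β ^ D) : (0 : ℝ) < (β : ℝ) ^ D - 1 := by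
  have : (1 : ℝ) < (β : ℝ) ^ D := by exact_mod_cast hN
  linarith

lemma quantStep_pos (hN : 1 < β ^ D) (hv : 0 < vmax) : 0 < quantStep β D vmax :=
  div_pos (by positivity) (cast_pow_sub_one_pos hN)

lemma qidx_eq_max_min (hN : 1 < β ^ D) (hv : 0 < vmax) (v : ℝ) :
    qidx β D vmax v
      = max 0 (min ⌊(v + vmax) / quantStep β D vmax + 1 / 2⌋ ((β : ℤ) ^ D - 1)) := by
  have hΔ := quantStep_pos hN hv
  set g : ℝ → ℝ := fun c => (c + vmax) / quantStep β D vmax + 1 / 2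
  have hg : Monotone g := fun c d hcd => by simp only [g]; gcongr
  have hqidx : qidx β D vmax v = ⌊g (clampR vmax v)⌋ := by
    unfold qidx
    congr 1
    simp only [g, quantStep]
    field_simp
  have hlo : g (-vmax) = ((0 : ℤ) : ℝ) + 1 / 2 := by simp [g]
  have hhi : g vmax = (((β : ℤ) ^ D - 1 : ℤ) : ℝ) + 1 / 2 := by
    simp only [g, quantStep]
    push_cast
    field_simp
    ring
  have hfloor_half : ⌊(1 / 2 : ℝ)⌋ = 0 := by norm_num [Int.floor_eq_zero_iff]
  rw [hqidx, clampR, hg.map_max, hg.map_min, hlo, hhi, Int.floor_mono.map_max,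
    Int.floor_mono.map_min, Int.floor_intCast_add, Int.floor_intCast_add,
    hfloor_half, add_zero, add_zero]

lemma qidx_nonneg (hN : 1 < β ^ D) (hv : 0 < vmax) (v : ℝ) : 0 ≤ qidx β D vmax v := by
  rw [qidx_eq_max_min hN hv]
  exact le_max_left _ _

lemma qidx_lt (hN : 1 < β ^ D) (hv : 0 < vmax) (v : ℝ) : qidx β D vmax v < (β : ℤ) ^ D := by
  have : (1 : ℤ) < (β : ℤ) ^ D := by exact_mod_cast hN
  rw [qidx_eq_max_min hN hv]
  exact max_lt (by omega) ((min_le_right _ _).trans_lt (by omega))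

lemma quant_eq (hN : 1 < β ^ D) (hodd : Odd β) (hv : 0 < vmax) (v : ℝ) :
    quant β D vmax v = quantStep β D vmax * qidx β D vmax v - vmax := by
  set n := qidx β D vmax v
  have hn : (n.toNat : ℤ) = n := Int.toNat_of_nonneg (qidx_nonneg hN hv v)
  have hlt : n.toNat < β ^ D := by
    have := qidx_lt hN hv v
    zify
    omega
  have hsum : ∑ i ∈ range D, (numeral β D vmax v i : ℝ) * (β : ℝ) ^ i
      = n - ((β : ℝ) ^ D - 1) / 2 := by
    have := two_mul_sum_balanced_digits hodd hlt
    rw [hn] at this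
    have hR : 2 * ∑ i ∈ range D, (numeral β D vmax v i : ℝ) * (β : ℝ) ^ i
        = 2 * n - ((β : ℝ) ^ D - 1) := by exact_mod_cast this
    linarith
  have hX := (cast_pow_sub_one_pos hN).ne'
  unfold quant quantStep
  rw [hsum]
  field_simp

lemma quant_sub_self_of_mem_Ico (hN : 1 < β ^ D) (hodd : Odd β) (hv : 0 < vmax) {v : ℝ}
    (hmem : v ∈ Ico (-vmax - quantStep β D vmax / 2) (vmax + quantStep β D vmax / 2)) :
    quant β D vmax v - v = quantStep β D vmax *
      (1 / 2 - Int.fract ((v - (-vmax - quantStep β D vmax / 2)) / quantStep β D vmax)) := by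
  set Δ := quantStep β D vmax
  have hΔ : 0 < Δ := quantStep_pos hN hv
  have hNΔ : ((β : ℝ) ^ D - 1) * Δ = 2 * vmax := by
    have hX := (cast_pow_sub_one_pos hN).ne'
    simp only [Δ, quantStep]
    field_simp
  have harg : (v - (-vmax - Δ / 2)) / Δ = (v + vmax) / Δ + 1 / 2 := by field_simp; ring
  have hfloor : ⌊(v + vmax) / Δ + 1 / 2⌋ ∈ Set.Icc 0 ((β : ℤ) ^ D - 1) := by
    obtain ⟨hlo, hhi⟩ := hmem
    refine ⟨Int.floor_nonneg.2 ?_, Int.le_sub_one_of_lt (Int.floor_lt.2 ?_)⟩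
    · rw [← harg]
      exact div_nonneg (by linarith) hΔ.le
    · rw [div_add' _ _ _ hΔ.ne', div_lt_iff₀ hΔ]
      push_cast
      linarith
  rw [quant_eq hN hodd hv, qidx_eq_max_min hN hv, min_eq_left hfloor.2, max_eq_right hfloor.1,
    harg, Int.fract]
  field_simp
  ring

lemma vmax_add_half_quantStep_eq (hN : 1 < β ^ D) :
    vmax + quantStep β D vmax / 2
      = (-vmax - quantStep β D vmax / 2) + (β ^ D : ℕ) * quantStep β D vmax := by
  have hX := (cast_pow_sub_one_pos hN).ne'
  unfold quantStep
  push_cast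
  field_simp
  ring

lemma measurable_quant : Measurable (quant β D vmax) := by
  unfold quant numeral bdigit qidx clampR
  fun_prop

lemma quant_sub_self_ae_eq (hN : 1 < β ^ D) (hodd : Odd β) (hv : 0 < vmax) :
    (fun v => quant β D vmax v - v)
      =ᵐ[volume[|Icc (-vmax - quantStep β D vmax / 2) (vmax + quantStep β D vmax / 2)]]
      fun v => quantStep β D vmax *
        (1 / 2 - Int.fract ((v - (-vmax - quantStep β D vmax / 2)) / quantStep β D vmax)) := by
  filter_upwards [ae_cond_mem measurableSet_Icc,
    cond_absolutelyContinuous.ae_le (Measure.ae_ne volume _)] with v hmem hne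
  exact quant_sub_self_of_mem_Ico hN hodd hv ⟨hmem.1, hmem.2.lt_of_ne hne⟩

lemma integral_quant_sub_self_pow (hN : 1 < β ^ D) (hodd : Odd β) (hv : 0 < vmax) (p : ℕ) :
    ∫ v, (quant β D vmax v - v) ^ p
        ∂volume[|Icc (-vmax - quantStep β D vmax / 2) (vmax + quantStep β D vmax / 2)]
      = quantStep β D vmax ^ p * ∫ t in (0 : ℝ)..1, (1 / 2 - t) ^ p := by
  refine (integral_congr_ae ((quant_sub_self_ae_eq hN hodd hv).fun_comp (· ^ p))).trans ?_
  rw [vmax_add_half_quantStep_eq hN]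
  exact integral_cond_Icc_mul_half_sub_fract_pow (quantStep_pos hN hv) (by omega) p

lemma memLp_quant_sub_self (hN : 1 < β ^ D) (hodd : Odd β) (hv : 0 < vmax) :
    MemLp (fun v => quant β D vmax v - v) 2
      (volume[|Icc (-vmax - quantStep β D vmax / 2) (vmax + quantStep β D vmax / 2)]) := by
  refine MemLp.of_bound (measurable_quant.sub measurable_id).aestronglyMeasurable
    (quantStep β D vmax / 2) ?_
  filter_upwards [quant_sub_self_ae_eq hN hodd hv] with v hv_eq
  rw [hv_eq, norm_mul, Real.norm_of_nonneg (quantStep_pos hN hv).le, Real.norm_eq_abs]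
  nlinarith [abs_half_sub_fract_le ((v - (-vmax - quantStep β D vmax / 2)) / quantStep β D vmax),
    quantStep_pos hN hv]

end Quantizer

section SecondMoment

variable {Ω : Type*} [MeasurableSpace Ω] {P : Measure Ω}

lemma integral_sq_sum_of_indepFun [IsFiniteMeasure P] {ι : Type*} {s : Finset ι}
    {Y : ι → Ω → ℝ}
    (hL2 : ∀ i ∈ s, MemLp (Y i) 2 P) (hmean : ∀ i ∈ s, ∫ ω, Y i ω ∂P = 0)
    (hindep : Set.Pairwise s fun i j => IndepFun (Y i) (Y j) P) :
    ∫ ω, (∑ i ∈ s, Y i ω) ^ 2 ∂P = ∑ i ∈ s, ∫ ω, Y i ω ^ 2 ∂P := by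
  have hsum_mean : ∫ ω, (∑ i ∈ s, Y i) ω ∂P = 0 := by
    simp only [Finset.sum_apply]
    rw [integral_finsetSum s fun i hi => (hL2 i hi).integrable one_le_two]
    exact sum_eq_zero hmean
  calc ∫ ω, (∑ i ∈ s, Y i ω) ^ 2 ∂P = variance (∑ i ∈ s, Y i) P := by
        rw [variance_of_integral_eq_zero (memLp_finsetSum' s hL2).aemeasurable hsum_mean]
        simp only [Finset.sum_apply]
    _ = ∑ i ∈ s, variance (Y i) P := IndepFun.variance_sum hL2 hindep
    _ = ∑ i ∈ s, ∫ ω, Y i ω ^ 2 ∂P := sum_congr rfl fun i hi =>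
        variance_of_integral_eq_zero (hL2 i hi).aemeasurable (hmean i hi)

lemma integral_sq_average_comp_of_iIndepFun [IsFiniteMeasure P] {ι α : Type*} [Fintype ι]
    [MeasurableSpace α]
    {μ : Measure α} {V : ι → Ω → α} {f : α → ℝ} (hV : ∀ i, AEMeasurable (V i) P)
    (hlaw : ∀ i, P.map (V i) = μ) (hindep : iIndepFun V P) (hf : Measurable f)
    (hL2 : MemLp f 2 μ) (hmean : ∫ x, f x ∂μ = 0) :
    ∫ ω, (1 / (Fintype.card ι : ℝ) * ∑ i, f (V i ω)) ^ 2 ∂P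
      = (∫ x, f x ^ 2 ∂μ) / Fintype.card ι := by
  have hmap : ∀ i {g : α → ℝ}, Measurable g → ∫ ω, g (V i ω) ∂P = ∫ x, g x ∂μ :=
    fun i g hg => by rw [← hlaw i, integral_map (hV i) hg.aestronglyMeasurable]
  have hL2' : ∀ i ∈ Finset.univ, MemLp (fun ω => f (V i ω)) 2 P := fun i _ =>
    (memLp_map_measure_iff (hlaw i ▸ hf.aestronglyMeasurable) (hV i)).1 (hlaw i ▸ hL2)
  have hpair : Set.Pairwise (Finset.univ : Finset ι) fun i j =>
      IndepFun (fun ω => f (V i ω)) (fun ω => f (V j ω)) P := fun i _ j _ hij =>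
    (hindep.indepFun hij).comp hf hf
  simp_rw [mul_pow]
  rw [integral_const_mul, integral_sq_sum_of_indepFun hL2' (fun i _ => (hmap i hf).trans hmean)
    hpair]
  simp_rw [hmap _ (hf.pow_const 2)]
  rw [sum_const, card_univ, nsmul_eq_mul]
  obtain hK | hK := eq_or_ne (Fintype.card ι : ℝ) 0
  · simp [hK]
  · field_simp

end SecondMoment

open MeasureTheory ProbabilityTheory in
theorem averaged_quant_error_second_moment_general {Ω : Type*} [MeasurableSpace Ω]
    (P : Measure Ω) [IsProbabilityMeasure P]
    (β D K : ℕ) (hβ : 3 ≤ β) (hodd : Odd β) (hD : 1 ≤ D)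
    (vmax : ℝ) (hv : 0 < vmax)
    (V : Fin K → Ω → ℝ) (hVmeas : ∀ k, Measurable (V k))
    (hindep : iIndepFun V P)
    (hlaw : ∀ k, Measure.map (V k) P =
      (volume (Set.Icc (-vmax - 2 * vmax / ((β : ℝ) ^ D - 1) / 2)
          (vmax + 2 * vmax / ((β : ℝ) ^ D - 1) / 2)))⁻¹ •
        volume.restrict (Set.Icc (-vmax - 2 * vmax / ((β : ℝ) ^ D - 1) / 2)
          (vmax + 2 * vmax / ((β : ℝ) ^ D - 1) / 2))) :
    ∫ ω, (1 / (K : ℝ) * ∑ k : Fin K, (quant β D vmax (V k ω) - V k ω)) ^ 2 ∂P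
      = vmax ^ 2 / (3 * (K : ℝ) * ((β : ℝ) ^ D - 1) ^ 2) := by
  have hN : 1 < β ^ D := Nat.one_lt_pow (by omega) (by omega)
  set μ := volume[|Icc (-vmax - quantStep β D vmax / 2) (vmax + quantStep β D vmax / 2)]
  have hmoment := integral_quant_sub_self_pow hN hodd hv
  have hmean : ∫ v, (quant β D vmax v - v) ∂μ = 0 := by
    have h := hmoment 1
    rw [integral_half_sub_pow] at h
    norm_num at h
    exact h
  -- `hlaw` is accepted as is: `volume[|s]` unfolds to `(volume s)⁻¹ • volume.restrict s`.
  have hsecond := integral_sq_average_comp_of_iIndepFun (μ := μ)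
    (f := fun v => quant β D vmax v - v) (fun k => (hVmeas k).aemeasurable) hlaw hindep
    (measurable_quant.sub measurable_id) (memLp_quant_sub_self hN hodd hv) hmean
  rw [Fintype.card_fin] at hsecond
  rw [hsecond, hmoment 2, integral_half_sub_pow, quantStep, mul_right_comm, ← div_div]
  congr 1
  field_simp
  norm_num

open MeasureTheory ProbabilityTheory in
/-- For an odd integer `β ≥ 3`, `D ≥ 1`, `K ≥ 1`, `v_max > 0` and `Δ = 2·v_max/(β^D − 1)`:
if `V_1,…,V_K` are independent, each uniformly distributed on
`[−v_max − Δ/2, v_max + Δ/2]`, then the mean squared averaged quantization error satisfies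
`E[((1/K)·Σ_k (q(V_k) − V_k))²] = v_max²/(3·K·(β^D − 1)²)`. -/
theorem averaged_quant_error_second_moment {Ω : Type*} [MeasurableSpace Ω]
    (P : Measure Ω) [IsProbabilityMeasure P]
    (β D K : ℕ) (hβ : 3 ≤ β) (hodd : Odd β) (hD : 1 ≤ D) (hK : 1 ≤ K)
    (vmax : ℝ) (hv : 0 < vmax)
    (V : Fin K → Ω → ℝ) (hVmeas : ∀ k, Measurable (V k))
    (hindep : iIndepFun V P)
    (hlaw : ∀ k, Measure.map (V k) P =
      (volume (Set.Icc (-vmax - 2 * vmax / ((β : ℝ) ^ D - 1) / 2)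
          (vmax + 2 * vmax / ((β : ℝ) ^ D - 1) / 2)))⁻¹ •
        volume.restrict (Set.Icc (-vmax - 2 * vmax / ((β : ℝ) ^ D - 1) / 2)
          (vmax + 2 * vmax / ((β : ℝ) ^ D - 1) / 2))) :
    ∫ ω, (1 / (K : ℝ) * ∑ k : Fin K, (quant β D vmax (V k ω) - V k ω)) ^ 2 ∂P
      = vmax ^ 2 / (3 * (K : ℝ) * ((β : ℝ) ^ D - 1) ^ 2) :=
  averaged_quant_error_second_moment_general P β D K hβ hodd hD vmax hv V hVmeas hindep hlaw
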